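/- arXiv:1707.05502 — 2 statements merged into one kernel-verified Lean document; each statement's English description precedes it below -/
import Mathlib

section
/- Let G be the incidence matrix of a directed graph Γ on q vertices. Then Γ is strongly connected (for every pair of vertices there is a directed path in each direction) if and only if the convex cone spanned by the columns of G contains the entire subspace {x ∈ ℝ^q : 1^T x = 0} (the orthogonal complement of the all-ones vector). -/
/-!
If every vertex reaches every other one, each difference `eₐ - e_b` of basis vectors is the sum of
the columns along a path from `a` to `b`, and these differences generate `{x : ∑ xᵢ = 0}` as a cone,
since `x = ∑ᵢ xᵢ (eᵢ - e_v)` and `xᵢ (eᵢ - e_v) = (-xᵢ) (e_v - eᵢ)`. Conversely, if `S` is the set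
of vertices reachable from `a`, no edge leaves `S`, so every column, and hence every point of the
cone, has coordinate sum `≤ 0` over `S`; as `eₐ - e_b` has sum `1 - [b ∈ S]` there, `b ∈ S`.
-/

open Matrix Finset

def Matrix.nonnegCone {m n : Type*} [Fintype n] (A : Matrix m n ℝ) : PointedCone ℝ (m → ℝ) where
  carrier := {x | ∃ α, 0 ≤ α ∧ A *ᵥ α = x}
  add_mem' := by
    rintro _ _ ⟨α, hα, rfl⟩ ⟨β, hβ, rfl⟩
    exact ⟨α + β, add_nonneg hα hβ, mulVec_add ..⟩
  zero_mem' := ⟨0, le_rfl, mulVec_zero _⟩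
  smul_mem' := by
    rintro ⟨c, hc⟩ _ ⟨α, hα, rfl⟩
    exact ⟨c • α, smul_nonneg hc hα, mulVec_smul ..⟩

section IncidenceMatrix

variable {V E : Type*} [DecidableEq V]

def edgeVec (a b : V) : V → ℝ := Pi.single a 1 - Pi.single b 1

def incidenceMatrix (g : E → V × V) : Matrix V E ℝ :=
  Matrix.of fun i σ => edgeVec (g σ).1 (g σ).2 i

lemma edgeVec_self (a : V) : edgeVec a a = 0 := sub_self _

lemma neg_edgeVec (a b : V) : -edgeVec a b = edgeVec b a := neg_sub _ _

lemma edgeVec_add_edgeVec (a b c : V) : edgeVec a b + edgeVec b c = edgeVec a c :=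
  sub_add_sub_cancel _ _ _

lemma sum_edgeVec (S : Finset V) (a b : V) :
    ∑ i ∈ S, edgeVec a b i = (if a ∈ S then 1 else 0) - (if b ∈ S then 1 else 0) := by
  simp only [edgeVec, Pi.sub_apply, sum_sub_distrib, sum_pi_single']

lemma smul_edgeVec_mem {C : PointedCone ℝ (V → ℝ)} {a b : V}
    (hab : edgeVec a b ∈ C) (hba : edgeVec b a ∈ C) (c : ℝ) : c • edgeVec a b ∈ C := by
  rcases le_total 0 c with hc | hc
  · exact C.smul_mem hc hab
  · rw [← neg_neg c, neg_smul, ← smul_neg, neg_edgeVec]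
    exact C.smul_mem (neg_nonneg.mpr hc) hba

lemma sum_smul_edgeVec_eq [Fintype V] (v : V) {x : V → ℝ} (hx : ∑ i, x i = 0) :
    ∑ i, x i • edgeVec i v = x := by
  ext j
  simp [edgeVec, mul_sub, sum_sub_distrib, hx, Pi.single_apply]

lemma mem_of_sum_eq_zero [Fintype V] {C : PointedCone ℝ (V → ℝ)}
    (hC : ∀ a b, edgeVec a b ∈ C) {x : V → ℝ} (hx : ∑ i, x i = 0) : x ∈ C := by
  cases isEmpty_or_nonempty V with
  | inl _ => exact Subsingleton.elim 0 x ▸ C.zero_mem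
  | inr hV =>
    obtain ⟨v⟩ := hV
    rw [← sum_smul_edgeVec_eq v hx]
    exact C.sum_mem fun i _ => smul_edgeVec_mem (hC i v) (hC v i) (x i)

variable (g : E → V × V)

def edgeRel (a b : V) : Prop := ∃ σ, g σ = (a, b)

lemma incidenceMatrix_col (σ : E) : (incidenceMatrix g).col σ = edgeVec (g σ).1 (g σ).2 := rfl

variable [Fintype E]

lemma edgeVec_mem_nonnegCone_of_reflTransGen {a b : V}
    (hab : Relation.ReflTransGen (edgeRel g) a b) :
    edgeVec a b ∈ (incidenceMatrix g).nonnegCone := by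
  induction hab with
  | refl => exact edgeVec_self a ▸ zero_mem _
  | @tail b c _ hbc ih =>
    classical
    obtain ⟨σ, hσ⟩ := hbc
    have hcol : edgeVec b c ∈ (incidenceMatrix g).nonnegCone :=
      ⟨Pi.single σ 1, Pi.single_nonneg.mpr zero_le_one, by
        rw [mulVec_single_one, incidenceMatrix_col, hσ]⟩
    exact edgeVec_add_edgeVec a b c ▸ add_mem ih hcol

lemma sum_le_zero_of_mem_nonnegCone {S : Finset V} (hS : ∀ σ, (g σ).1 ∈ S → (g σ).2 ∈ S)
    {x : V → ℝ} (hx : x ∈ (incidenceMatrix g).nonnegCone) : ∑ i ∈ S, x i ≤ 0 := by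
  obtain ⟨α, hα, rfl⟩ := hx
  have hcol (σ : E) : ∑ i ∈ S, incidenceMatrix g i σ ≤ 0 := by
    simp only [incidenceMatrix, of_apply, sum_edgeVec]
    by_cases h : (g σ).1 ∈ S
    · simp [h, hS σ h]
    · rw [if_neg h]
      split_ifs <;> norm_num
  simp only [mulVec, dotProduct]
  rw [sum_comm]
  refine sum_nonpos fun σ _ => ?_
  rw [← sum_mul]
  exact mul_nonpos_of_nonpos_of_nonneg (hcol σ) (hα σ)

lemma reflTransGen_of_edgeVec_mem_nonnegCone [Fintype V] {a b : V}
    (hab : edgeVec a b ∈ (incidenceMatrix g).nonnegCone) :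
    Relation.ReflTransGen (edgeRel g) a b := by
  classical
  let S := univ.filter (Relation.ReflTransGen (edgeRel g) a)
  have hS : ∀ σ, (g σ).1 ∈ S → (g σ).2 ∈ S := by
    simp only [S, mem_filter, mem_univ, true_and]
    exact fun σ h => h.tail ⟨σ, rfl⟩
  have hsum := sum_le_zero_of_mem_nonnegCone g hS hab
  have ha : a ∈ S := mem_filter.mpr ⟨mem_univ a, .refl⟩
  by_contra hnb
  have hb : b ∉ S := by simpa [S] using hnb
  norm_num [sum_edgeVec, ha, hb] at hsum

end IncidenceMatrix

theorem stmt2_general (q p : ℕ) (g : Fin p → Fin q × Fin q)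
    (G : Matrix (Fin q) (Fin p) ℝ)
    (hG : ∀ i σ, G i σ =
      (if i = (g σ).1 then (1 : ℝ) else 0) - (if i = (g σ).2 then 1 else 0)) :
    (∀ k ℓ : Fin q, Relation.ReflTransGen (fun a b => ∃ σ, g σ = (a, b)) k ℓ) ↔
    ∀ x : Fin q → ℝ, (∑ i : Fin q, x i = 0) →
      ∃ α : Fin p → ℝ, (∀ σ, 0 ≤ α σ) ∧ G.mulVec α = x := by
  obtain rfl : G = incidenceMatrix g := by
    ext i σ
    simp [hG, incidenceMatrix, edgeVec, Pi.single_apply]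
  constructor
  · intro hconn x hx
    exact mem_of_sum_eq_zero (fun a b => edgeVec_mem_nonnegCone_of_reflTransGen g (hconn a b)) hx
  · intro hcone a b
    apply reflTransGen_of_edgeVec_mem_nonnegCone g
    exact hcone _ (by simp [sum_edgeVec])

/-- a directed graph is strongly connected iff the cone spanned by the
columns of its incidence matrix contains `{x : 1ᵀx = 0}`. -/
theorem stmt2 (q p : ℕ) (g : Fin p → Fin q × Fin q)
    (hg : ∀ σ, (g σ).1 ≠ (g σ).2)
    (G : Matrix (Fin q) (Fin p) ℝ)
    (hG : ∀ i σ, G i σ =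
      (if i = (g σ).1 then (1 : ℝ) else 0) - (if i = (g σ).2 then 1 else 0)) :
    (∀ k ℓ : Fin q, Relation.ReflTransGen (fun a b => ∃ σ, g σ = (a, b)) k ℓ) ↔
    ∀ x : Fin q → ℝ, (∑ i : Fin q, x i = 0) →
      ∃ α : Fin p → ℝ, (∀ σ, 0 ≤ α σ) ∧ G.mulVec α = x :=
  stmt2_general q p g G hG
end

section
/- Consider the array ẋ_i = A x_i + Σ_σ B_{iσ} u_σ with Σ_i B_{iσ} = 0, written as ẋ = 𝐀x + 𝐁u with 𝐀 = I_q ⊗ A, and let 𝐖 be its controllability matrix. For distinct indices k, ℓ ∈ {1,...,q}, the array is (k,ℓ)-controllable if and only if range 𝐖 ⊇ range[(e_k − e_ℓ) ⊗ I_n]. -/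
open Matrix Kronecker

/-- Controllability matrix `[B  MB  ⋯  M^{N-1}B]`. -/
noncomputable def ctrb {ι J : Type*} [Fintype ι] [DecidableEq ι]
    (M : Matrix ι ι ℝ) (B : Matrix ι J ℝ) (N : ℕ) : Matrix ι (Fin N × J) ℝ :=
  Matrix.of fun x rσ => ((M ^ (rσ.1 : ℕ)) * B) x rσ.2

/-!
Write `𝐀 = I_q ⊗ A`. By Cayley–Hamilton for `A`, `range 𝐖` is the Krylov space `K` spanned by
all `𝐀 ^ r * B *ᵥ c`, the smallest `𝐀`-invariant subspace containing `range B`. Being closed, `K`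
is invariant under every `exp (s • 𝐀)`, so every forced response `∫₀^τ e^{(τ-t)𝐀} B u(t) dt`
lies in `K`. Conversely, the Gramian `η ↦ ∫₀¹ e^{(1-t)𝐀} B Bᵀ e^{(1-t)𝐀}ᵀ η dt` maps `K` into
itself injectively (`η ⬝ᵥ W η = 0` forces `η ⬝ᵥ e^{s𝐀} 𝐀^r B c = 0`, hence `η ⊥ K`), so every
vector of `K` is a forced response.

Relative actuation makes the column sums `∑ i, d (i, j)` of every forced response `d` vanish.
Starting from `x(0) = -(e_k - e_ℓ) ⊗ v`, a control that synchronises agents `k` and `ℓ` without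
disturbing the others has a forced response supported on rows `k`, `ℓ` with opposite signs, and
the synchronisation pins it down to `e^{τ𝐀} ((e_k - e_ℓ) ⊗ v)`, so `(e_k - e_ℓ) ⊗ v ∈ K`.
Conversely, steering along `(e_k - e_ℓ) ⊗ ½ e^A (x_ℓ(0) - x_k(0)) ∈ K` synchronises `k` and `ℓ`
at time `1` and leaves the other agents on their free trajectories.
-/

open NormedSpace Polynomial

theorem Polynomial.pow_mem_span_pow_of_aeval_eq_zero {R A : Type*} [CommRing R] [Ring A]
    [Algebra R A] {x : A} {p : R[X]} {N : ℕ} (hp : p.Monic) (hpN : p.natDegree ≤ N)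
    (hx : aeval x p = 0) (r : ℕ) :
    x ^ r ∈ Submodule.span R (Set.range fun i : Fin N => x ^ (i : ℕ)) := by
  rcases eq_or_ne p 1 with rfl | hp1
  · have : Subsingleton A := subsingleton_of_zero_eq_one (by simpa using hx.symm)
    rw [Subsingleton.elim (x ^ r) 0]
    exact zero_mem _
  have hdeg : (X ^ r %ₘ p).natDegree < N := (natDegree_modByMonic_lt _ hp hp1).trans_le hpN
  rw [← aeval_X_pow (R := R), ← aeval_modByMonic_eq_self_of_root hx,
    aeval_eq_sum_range' hdeg, ← Fin.sum_univ_eq_sum_range]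
  exact Submodule.sum_mem _ fun i _ => Submodule.smul_mem _ _ (Submodule.subset_span ⟨i, rfl⟩)

namespace intervalIntegral

theorem integral_mem_submodule {E : Type*} [NormedAddCommGroup E] [NormedSpace ℝ E]
    [FiniteDimensional ℝ E] (S : Submodule ℝ E) {f : ℝ → E} (hf : ∀ t, f t ∈ S) (a b : ℝ) :
    ∫ t in a..b, f t ∈ S := by
  by_cases hfi : IntervalIntegrable f MeasureTheory.volume a b
  · -- `S` is the kernel of a linear map to a finite-dimensional space, which commutes with `∫`.
    let L : E →ₗ[ℝ] Fin (Module.finrank ℝ (E ⧸ S)) → ℝ :=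
      (Module.finBasis ℝ (E ⧸ S)).equivFun.toLinearMap ∘ₗ S.mkQ
    have hL : LinearMap.ker L = S := by rw [LinearEquiv.ker_comp, Submodule.ker_mkQ]
    have hLf : ∀ t, L (f t) = 0 := fun t => by rw [← LinearMap.mem_ker, hL]; exact hf t
    rw [← hL, LinearMap.mem_ker, ← LinearMap.coe_toContinuousLinearMap' L,
      ← (LinearMap.toContinuousLinearMap L).intervalIntegral_comp_comm hfi]
    simp [hLf]
  · rw [integral_undef hfi]
    exact zero_mem S

theorem eqOn_zero_of_integral_eq_zero {f : ℝ → ℝ} {a b : ℝ} (hab : a ≤ b) (hf : Continuous f)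
    (hf0 : ∀ t, 0 ≤ f t) (h : ∫ t in a..b, f t = 0) : Set.EqOn f 0 (Set.Ioc a b) := by
  rw [integral_eq_zero_iff_of_le_of_nonneg_ae hab (Filter.Eventually.of_forall hf0)
    (hf.intervalIntegrable a b)] at h
  exact MeasureTheory.Measure.eqOn_Ioc_of_ae_eq _ h hf.continuousOn continuousOn_const

end intervalIntegral

noncomputable section

namespace Matrix

section Exponential

variable {ι : Type*} [Fintype ι] [DecidableEq ι]

def mulVecStabilizer (S : Submodule ℝ (ι → ℝ)) : Subalgebra ℝ (Matrix ι ι ℝ) where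
  carrier := {X | ∀ z ∈ S, X *ᵥ z ∈ S}
  mul_mem' {X Y} hX hY z hz := by rw [← mulVec_mulVec]; exact hX _ (hY z hz)
  add_mem' {X Y} hX hY z hz := by rw [add_mulVec]; exact S.add_mem (hX z hz) (hY z hz)
  algebraMap_mem' r z hz := by
    rw [Algebra.algebraMap_eq_smul_one, smul_mulVec, one_mulVec]
    exact S.smul_mem r hz

theorem isClosed_mulVecStabilizer (S : Submodule ℝ (ι → ℝ)) :
    IsClosed (mulVecStabilizer S : Set (Matrix ι ι ℝ)) := by
  have : (mulVecStabilizer S : Set (Matrix ι ι ℝ)) = ⋂ z ∈ S, (· *ᵥ z) ⁻¹' S := by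
    ext X; simp [mulVecStabilizer]
  rw [this]
  exact isClosed_biInter fun z _ =>
    S.closed_of_finiteDimensional.preimage (continuous_id.matrix_mulVec continuous_const)

theorem exp_smul_mulVec_mem {S : Submodule ℝ (ι → ℝ)} {M : Matrix ι ι ℝ}
    (hM : ∀ z ∈ S, M *ᵥ z ∈ S) (s : ℝ) {z : ι → ℝ} (hz : z ∈ S) : exp (s • M) *ᵥ z ∈ S :=
  exp_mem (s := mulVecStabilizer S) (isClosed_mulVecStabilizer S)
    (Subalgebra.smul_mem _ (show M ∈ mulVecStabilizer S from hM) s) z hz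

theorem exp_smul_mulVec_exp_smul_mulVec (M : Matrix ι ι ℝ) (s t : ℝ) (z : ι → ℝ) :
    exp (s • M) *ᵥ (exp (t • M) *ᵥ z) = exp ((s + t) • M) *ᵥ z := by
  rw [mulVec_mulVec, add_smul,
    Matrix.exp_add_of_commute _ _ (((Commute.refl M).smul_left s).smul_right t)]

theorem continuous_exp_smul (M : Matrix ι ι ℝ) : Continuous fun s : ℝ => exp (s • M) := by
  let _ := Matrix.linftyOpNormedRing (n := ι) (α := ℝ)
  let _ := Matrix.linftyOpNormedAlgebra (R := ℝ) (n := ι) (α := ℝ)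
  exact continuous_iff_continuousAt.2 fun s => (hasDerivAt_exp_smul_const M s).continuousAt

theorem dotProduct_exp_smul_mulVec_mulVec_eq_zero {M : Matrix ι ι ℝ} {U : Set ℝ}
    (hU : IsOpen U) {η w : ι → ℝ} (h : ∀ s ∈ U, η ⬝ᵥ (exp (s • M) *ᵥ w) = 0) :
    ∀ s ∈ U, η ⬝ᵥ (exp (s • M) *ᵥ (M *ᵥ w)) = 0 := by
  intro s hs
  let L : Matrix ι ι ℝ →ₗ[ℝ] ℝ :=
    { toFun := fun X => η ⬝ᵥ (X *ᵥ w)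
      map_add' := fun X Y => by simp [add_mulVec]
      map_smul' := fun a X => by simp [smul_mulVec] }
  let _ := Matrix.linftyOpNormedRing (n := ι) (α := ℝ)
  let _ := Matrix.linftyOpNormedAlgebra (R := ℝ) (n := ι) (α := ℝ)
  have hderiv : HasDerivAt (fun s : ℝ => L (exp (s • M))) (L (exp (s • M) * M)) s :=
    (LinearMap.toContinuousLinearMap L).hasFDerivAt.comp_hasDerivAt s
      (hasDerivAt_exp_smul_const M s)
  have hzero : HasDerivAt (fun s : ℝ => L (exp (s • M))) 0 s :=
    (hasDerivAt_const s (0 : ℝ)).congr_of_eventuallyEq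
      (Filter.eventually_of_mem (hU.mem_nhds hs) h)
  simpa [L, mulVec_mulVec] using hderiv.unique hzero

end Exponential

section Krylov

variable {ι J : Type*} [Fintype ι] [DecidableEq ι] [Fintype J]

def krylov (M : Matrix ι ι ℝ) (B : Matrix ι J ℝ) : Submodule ℝ (ι → ℝ) :=
  ⨆ r : ℕ, LinearMap.range (M ^ r * B).mulVecLin

variable {M : Matrix ι ι ℝ} {B : Matrix ι J ℝ}

theorem pow_mul_mulVec_mem_krylov (r : ℕ) (c : J → ℝ) : (M ^ r * B) *ᵥ c ∈ krylov M B :=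
  Submodule.mem_iSup_of_mem r ⟨c, rfl⟩

theorem mulVec_mem_krylov (c : J → ℝ) : B *ᵥ c ∈ krylov M B := by
  simpa using pow_mul_mulVec_mem_krylov (M := M) (B := B) 0 c

theorem krylov_le {S : Submodule ℝ (ι → ℝ)} (h : ∀ r c, (M ^ r * B) *ᵥ c ∈ S) :
    krylov M B ≤ S :=
  iSup_le fun r => LinearMap.range_le_iff_comap.mpr (eq_top_iff.mpr fun c _ => h r c)

theorem mulVec_mem_krylov_of_mem {z : ι → ℝ} (hz : z ∈ krylov M B) : M *ᵥ z ∈ krylov M B := by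
  refine krylov_le (S := (krylov M B).comap M.mulVecLin) (fun r c => ?_) hz
  rw [Submodule.mem_comap, mulVecLin_apply, mulVec_mulVec, ← Matrix.mul_assoc, ← pow_succ']
  exact pow_mul_mulVec_mem_krylov _ c

theorem exp_mulVec_mem_krylov (s : ℝ) {z : ι → ℝ} (hz : z ∈ krylov M B) :
    exp (s • M) *ᵥ z ∈ krylov M B :=
  exp_smul_mulVec_mem (fun _ => mulVec_mem_krylov_of_mem) s hz

theorem ctrb_mulVec (N : ℕ) (α : Fin N × J → ℝ) :
    ctrb M B N *ᵥ α = ∑ r : Fin N, (M ^ (r : ℕ) * B) *ᵥ fun σ => α (r, σ) := by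
  ext x
  simp only [mulVec, dotProduct, ctrb, of_apply, Fintype.sum_prod_type, Finset.sum_apply]

theorem range_ctrb_eq_krylov {p : ℝ[X]} {N : ℕ} (hp : p.Monic) (hpN : p.natDegree ≤ N)
    (hMp : aeval M p = 0) : LinearMap.range (ctrb M B N).mulVecLin = krylov M B := by
  apply le_antisymm
  · rintro _ ⟨α, rfl⟩
    rw [mulVecLin_apply, ctrb_mulVec]
    exact Submodule.sum_mem _ fun r _ => pow_mul_mulVec_mem_krylov _ _
  refine krylov_le fun r c => ?_
  refine Submodule.span_induction
    (p := fun X _ => (X * B) *ᵥ c ∈ LinearMap.range (ctrb M B N).mulVecLin) ?_ ?_ ?_ ?_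
    (pow_mem_span_pow_of_aeval_eq_zero hp hpN hMp r)
  · rintro _ ⟨i, rfl⟩
    refine ⟨fun iσ => if iσ.1 = i then c iσ.2 else 0, ?_⟩
    rw [mulVecLin_apply, ctrb_mulVec, Finset.sum_eq_single i
      (fun j _ hj => by simp only [hj, if_false]; exact mulVec_zero _) (by simp)]
    simp
  · simp
  · intro X Y _ _ hX hY
    rw [Matrix.add_mul, add_mulVec]
    exact Submodule.add_mem _ hX hY
  · intro a X _ hX
    rw [smul_mul, smul_mulVec]
    exact Submodule.smul_mem _ a hX

end Krylov

section Gramian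

variable {ι J : Type*} [Fintype ι] [DecidableEq ι]
variable (M : Matrix ι ι ℝ) (B : Matrix ι J ℝ)

def gramianControl (η : ι → ℝ) (t : ℝ) : J → ℝ :=
  (exp ((1 - t) • M) * B)ᵀ *ᵥ η

theorem continuous_gramianControl (η : ι → ℝ) : Continuous (gramianControl M B η) :=
  (((continuous_exp_smul M).comp (continuous_const.sub continuous_id)).matrix_mul
    continuous_const).matrix_transpose.matrix_mulVec continuous_const

variable [Fintype J]

def forcedResponse (τ : ℝ) (u : ℝ → J → ℝ) : ι → ℝ :=
  ∫ t in 0..τ, exp ((τ - t) • M) *ᵥ (B *ᵥ u t)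

variable {M B}

theorem forcedResponse_mem {S : Submodule ℝ (ι → ℝ)} (hM : ∀ z ∈ S, M *ᵥ z ∈ S)
    (hB : ∀ c, B *ᵥ c ∈ S) (τ : ℝ) (u : ℝ → J → ℝ) : forcedResponse M B τ u ∈ S :=
  intervalIntegral.integral_mem_submodule S (fun _ => exp_smul_mulVec_mem hM _ (hB _)) 0 τ

theorem intervalIntegrable_gramian_integrand (η : ι → ℝ) :
    IntervalIntegrable (fun t => exp ((1 - t) • M) *ᵥ (B *ᵥ gramianControl M B η t))
      MeasureTheory.volume 0 1 :=
  (((continuous_exp_smul M).comp (continuous_const.sub continuous_id)).matrix_mulVec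
    (continuous_const.matrix_mulVec (continuous_gramianControl M B η))).intervalIntegrable _ _

variable (M B)

/-- The controllability Gramian `W = ∫₀¹ e^{(1-t)M} B Bᵀ e^{(1-t)M}ᵀ dt`, as the map
`η ↦ W η`: the forced response to the control `gramianControl M B η`. -/
def gramian : (ι → ℝ) →ₗ[ℝ] (ι → ℝ) where
  toFun η := forcedResponse M B 1 (gramianControl M B η)
  map_add' η η' := by
    simp only [forcedResponse, gramianControl, mulVec_add]
    exact intervalIntegral.integral_add (intervalIntegrable_gramian_integrand η)
      (intervalIntegrable_gramian_integrand η')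
  map_smul' a η := by
    simp only [forcedResponse, gramianControl, mulVec_smul, RingHom.id_apply]
    exact intervalIntegral.integral_smul a _

variable {M B}

theorem dotProduct_gramian (η : ι → ℝ) :
    η ⬝ᵥ gramian M B η = ∫ t in 0..1, gramianControl M B η t ⬝ᵥ gramianControl M B η t := by
  rw [gramian, LinearMap.coe_mk, AddHom.coe_mk, forcedResponse, ← dotProductBilin_apply_apply ℝ ℝ,
    ← LinearMap.coe_toContinuousLinearMap', ← ContinuousLinearMap.intervalIntegral_comp_comm _
      (intervalIntegrable_gramian_integrand η)]
  congr 1 with t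
  rw [LinearMap.coe_toContinuousLinearMap', dotProductBilin_apply_apply, mulVec_mulVec,
    dotProduct_mulVec, ← mulVec_transpose]
  rfl

theorem gramianControl_eq_zero {η : ι → ℝ} (h : η ⬝ᵥ gramian M B η = 0) :
    ∀ t ∈ Set.Ioc (0 : ℝ) 1, gramianControl M B η t = 0 := by
  rw [dotProduct_gramian] at h
  have hc := continuous_gramianControl M B η
  intro t ht
  exact dotProduct_self_eq_zero.mp <| intervalIntegral.eqOn_zero_of_integral_eq_zero zero_le_one
    (hc.dotProduct hc) (fun _ => Finset.sum_nonneg fun _ _ => mul_self_nonneg _) h ht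

theorem dotProduct_exp_smul_mulVec_eq_zero_of_gramian {η : ι → ℝ}
    (h : η ⬝ᵥ gramian M B η = 0) (r : ℕ) (c : J → ℝ) :
    ∀ s ∈ Set.Ioo (0 : ℝ) 1, η ⬝ᵥ (exp (s • M) *ᵥ ((M ^ r * B) *ᵥ c)) = 0 := by
  induction r with
  | zero =>
    intro s hs
    have := gramianControl_eq_zero h (1 - s) ⟨by linarith [hs.2], by linarith [hs.1]⟩
    rw [gramianControl, sub_sub_cancel] at this
    rw [pow_zero, Matrix.one_mul, mulVec_mulVec, dotProduct_mulVec, ← mulVec_transpose, this,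
      zero_dotProduct]
  | succ r ih =>
    rw [pow_succ', Matrix.mul_assoc, ← mulVec_mulVec]
    exact dotProduct_exp_smul_mulVec_mulVec_eq_zero isOpen_Ioo ih

theorem eq_zero_of_gramian_eq_zero {η : ι → ℝ} (hη : η ∈ krylov M B) (h : gramian M B η = 0) :
    η = 0 := by
  have h0 : η ⬝ᵥ gramian M B η = 0 := by rw [h, dotProduct_zero]
  -- Test `η` against `exp (s • M) *ᵥ K` for an interior time `s`; this is all of `K`.
  let s : ℝ := 1 / 2
  have hs : s ∈ Set.Ioo (0 : ℝ) 1 := by norm_num [s]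
  have hK : krylov M B ≤ LinearMap.ker ((dotProductBilin ℝ ℝ η) ∘ₗ (exp (s • M)).mulVecLin) :=
    krylov_le fun r c => dotProduct_exp_smul_mulVec_eq_zero_of_gramian h0 r c s hs
  have := hK (exp_mulVec_mem_krylov (-s) hη)
  rw [LinearMap.mem_ker, LinearMap.comp_apply, mulVecLin_apply, exp_smul_mulVec_exp_smul_mulVec,
    add_neg_cancel, zero_smul, exp_zero, one_mulVec, dotProductBilin_apply_apply] at this
  exact dotProduct_self_eq_zero.mp this

theorem exists_gramian_eq {d : ι → ℝ} (hd : d ∈ krylov M B) : ∃ η, gramian M B η = d := by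
  have hmaps : ∀ η ∈ krylov M B, gramian M B η ∈ krylov M B := fun η _ =>
    forcedResponse_mem (fun _ => mulVec_mem_krylov_of_mem) mulVec_mem_krylov _ _
  let T := (gramian M B).restrict hmaps
  have hT : Function.Injective T := by
    rw [← LinearMap.ker_eq_bot, LinearMap.ker_eq_bot']
    rintro ⟨η, hη⟩ hTη
    exact Subtype.ext (eq_zero_of_gramian_eq_zero hη (congrArg Subtype.val hTη))
  obtain ⟨⟨η, _⟩, hηd⟩ := LinearMap.injective_iff_surjective.mp hT ⟨d, hd⟩
  exact ⟨η, congrArg Subtype.val hηd⟩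

theorem exists_forcedResponse_eq {d : ι → ℝ} (hd : d ∈ krylov M B) :
    ∃ u : ℝ → J → ℝ, Continuous u ∧ forcedResponse M B 1 u = d := by
  obtain ⟨η, hη⟩ := exists_gramian_eq hd
  exact ⟨gramianControl M B η, continuous_gramianControl M B η, hη⟩

end Gramian

section Kronecker

variable {m ι : Type*} [Fintype m] [DecidableEq m] [Fintype ι]

theorem one_kronecker_mulVec_apply (C : Matrix ι ι ℝ) (z : m × ι → ℝ) (i : m) (j : ι) :
    (((1 : Matrix m m ℝ) ⊗ₖ C) *ᵥ z) (i, j) = (C *ᵥ fun j' => z (i, j')) j := by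
  simp only [mulVec, dotProduct, Fintype.sum_prod_type, kroneckerMap_apply, one_apply]
  rw [Finset.sum_eq_single i (fun i' _ hi' => by simp [Ne.symm hi']) (by simp)]
  simp

variable [DecidableEq ι]

def oneKroneckerAlgHom : Matrix ι ι ℝ →ₐ[ℝ] Matrix (m × ι) (m × ι) ℝ :=
  (kroneckerAlgEquiv m ι ℝ).toAlgHom.comp Algebra.TensorProduct.includeRight

theorem oneKroneckerAlgHom_apply (C : Matrix ι ι ℝ) :
    oneKroneckerAlgHom C = (1 : Matrix m m ℝ) ⊗ₖ C := by
  simp [oneKroneckerAlgHom]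

theorem aeval_one_kronecker (C : Matrix ι ι ℝ) (p : ℝ[X]) :
    aeval ((1 : Matrix m m ℝ) ⊗ₖ C) p = 1 ⊗ₖ aeval C p := by
  rw [← oneKroneckerAlgHom_apply, ← oneKroneckerAlgHom_apply, aeval_algHom_apply]

theorem exp_one_kronecker (C : Matrix ι ι ℝ) :
    exp ((1 : Matrix m m ℝ) ⊗ₖ C) = 1 ⊗ₖ exp C := by
  let _ := Matrix.linftyOpNormedRing (n := ι) (α := ℝ)
  let _ := Matrix.linftyOpNormedAlgebra (R := ℝ) (n := ι) (α := ℝ)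
  let _ := Matrix.linftyOpNormedRing (n := m × ι) (α := ℝ)
  let _ := Matrix.linftyOpNormedAlgebra (R := ℝ) (n := m × ι) (α := ℝ)
  let _ : NormedAlgebra ℚ (Matrix ι ι ℝ) := NormedAlgebra.restrictScalars ℚ ℝ _
  let _ : NormedAlgebra ℚ (Matrix (m × ι) (m × ι) ℝ) := NormedAlgebra.restrictScalars ℚ ℝ _
  rw [← oneKroneckerAlgHom_apply, ← oneKroneckerAlgHom_apply]
  exact (map_exp _ oneKroneckerAlgHom.toLinearMap.continuous_of_finiteDimensional C).symm

theorem exp_smul_one_kronecker_mulVec_apply (C : Matrix ι ι ℝ) (s : ℝ) (z : m × ι → ℝ) (i : m)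
    (j : ι) : (exp (s • (1 : Matrix m m ℝ) ⊗ₖ C) *ᵥ z) (i, j) =
      (exp (s • C) *ᵥ fun j' => z (i, j')) j := by
  rw [← kronecker_smul, exp_one_kronecker, one_kronecker_mulVec_apply]

end Kronecker

section RelativeActuation

variable {m ι : Type*} [Fintype m]

def rowSum : (m × ι → ℝ) →ₗ[ℝ] (ι → ℝ) := ∑ i : m, LinearMap.funLeft ℝ ℝ (Prod.mk i)

theorem rowSum_eq_sum (z : m × ι → ℝ) : rowSum z = ∑ i, fun j => z (i, j) := by
  simp [rowSum]; rfl

theorem rowSum_apply (z : m × ι → ℝ) (j : ι) : rowSum z j = ∑ i, z (i, j) := by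
  simp [rowSum_eq_sum]

theorem rowSum_one_kronecker_mulVec [DecidableEq m] [Fintype ι] (C : Matrix ι ι ℝ)
    (z : m × ι → ℝ) : rowSum (((1 : Matrix m m ℝ) ⊗ₖ C) *ᵥ z) = C *ᵥ rowSum z := by
  simp only [rowSum_eq_sum, mulVec_sum, one_kronecker_mulVec_apply]

theorem rowSum_mulVec_eq_zero {J : Type*} [Fintype ι] [Fintype J] {B : Matrix (m × ι) J ℝ}
    (hB : ∀ σ j, ∑ i, B (i, j) σ = 0) (c : J → ℝ) : rowSum (B *ᵥ c) = 0 := by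
  ext j
  simp only [rowSum_apply, mulVec, dotProduct, Pi.zero_apply]
  rw [Finset.sum_comm]
  simp [← Finset.sum_mul, hB]

variable [DecidableEq m]

/-- The vector `(e_k - e_ℓ) ⊗ v`. -/
def pairDiff (k ℓ : m) (v : ι → ℝ) : m × ι → ℝ :=
  fun ij => ((if ij.1 = k then 1 else 0) - (if ij.1 = ℓ then 1 else 0)) * v ij.2

theorem one_kronecker_mulVec_pairDiff [Fintype ι] (C : Matrix ι ι ℝ) (k ℓ : m) (v : ι → ℝ) :
    ((1 : Matrix m m ℝ) ⊗ₖ C) *ᵥ pairDiff k ℓ v = pairDiff k ℓ (C *ᵥ v) := by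
  ext ⟨i, j⟩
  rw [one_kronecker_mulVec_apply]
  simp only [pairDiff, mulVec, dotProduct, Finset.mul_sum]
  exact Finset.sum_congr rfl fun _ _ => by ring

theorem eq_pairDiff_of_rowSum_eq_zero {k ℓ : m} (hkl : k ≠ ℓ) {z : m × ι → ℝ}
    (hz : rowSum z = 0) (hrest : ∀ i, i ≠ k → i ≠ ℓ → ∀ j, z (i, j) = 0) :
    z = pairDiff k ℓ fun j => z (k, j) := by
  have hℓ : ∀ j, z (ℓ, j) = -z (k, j) := fun j => by
    have := congrFun hz j
    rw [rowSum_apply, ← Finset.sum_subset (Finset.subset_univ {k, ℓ}) fun i _ hi => by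
        simp only [Finset.mem_insert, Finset.mem_singleton, not_or] at hi
        exact hrest i hi.1 hi.2 j,
      Finset.sum_pair hkl, Pi.zero_apply] at this
    linarith
  ext ⟨i, j⟩
  by_cases hik : i = k
  · subst hik; simp [pairDiff, hkl]
  by_cases hil : i = ℓ
  · subst hil; simp [pairDiff, hik, hℓ]
  simp [pairDiff, hik, hil, hrest i hik hil j]

end RelativeActuation

section Array

variable {m ι J : Type*} [Fintype m] [DecidableEq m] [Fintype ι] [DecidableEq ι] [Fintype J]
variable {A : Matrix ι ι ℝ} {B : Matrix (m × ι) J ℝ}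

local notation "𝐀" => (1 : Matrix m m ℝ) ⊗ₖ A

theorem range_ctrb_one_kronecker_eq_krylov {N : ℕ} (hN : Fintype.card ι ≤ N) :
    LinearMap.range (ctrb 𝐀 B N).mulVecLin = krylov 𝐀 B :=
  range_ctrb_eq_krylov A.charpoly_monic (A.charpoly_natDegree_eq_dim.trans_le hN)
    (by rw [aeval_one_kronecker, aeval_self_charpoly, kronecker_zero])

theorem pairDiff_mem_krylov_of_sync {k ℓ : m} (hkl : k ≠ ℓ) (hB : ∀ σ j, ∑ i, B (i, j) σ = 0)
    {v : ι → ℝ} {τ : ℝ} {u : ℝ → J → ℝ}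
    (hsync : ∀ j, (exp (τ • 𝐀) *ᵥ -pairDiff k ℓ v + forcedResponse 𝐀 B τ u) (k, j) =
      (exp (τ • 𝐀) *ᵥ -pairDiff k ℓ v + forcedResponse 𝐀 B τ u) (ℓ, j))
    (hrest : ∀ i, i ≠ k → i ≠ ℓ → ∀ j,
      (exp (τ • 𝐀) *ᵥ -pairDiff k ℓ v + forcedResponse 𝐀 B τ u) (i, j) =
        (exp (τ • A) *ᵥ fun j' => (-pairDiff k ℓ v) (i, j')) j) :
    pairDiff k ℓ v ∈ krylov 𝐀 B := by
  set d := forcedResponse 𝐀 B τ u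
  have hy : exp (τ • 𝐀) *ᵥ pairDiff k ℓ v = pairDiff k ℓ (exp (τ • A) *ᵥ v) := by
    rw [← kronecker_smul, exp_one_kronecker, one_kronecker_mulVec_pairDiff]
  have hrow : rowSum d = 0 := by
    refine LinearMap.mem_ker.mp
      (forcedResponse_mem (fun z hz => ?_) (rowSum_mulVec_eq_zero hB) τ u)
    rw [LinearMap.mem_ker, rowSum_one_kronecker_mulVec, LinearMap.mem_ker.mp hz, mulVec_zero]
  have hrest' : ∀ i, i ≠ k → i ≠ ℓ → ∀ j, d (i, j) = 0 := fun i hik hil j => by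
    have := hrest i hik hil j
    rw [← exp_smul_one_kronecker_mulVec_apply, Pi.add_apply] at this
    linarith
  have hd := eq_pairDiff_of_rowSum_eq_zero hkl hrow hrest'
  have hdk : (fun j => d (k, j)) = exp (τ • A) *ᵥ v := funext fun j => by
    have := hsync j
    rw [hd] at this
    simp [mulVec_neg, hy, pairDiff, hkl, Ne.symm hkl] at this
    linarith
  have hmem : exp (τ • 𝐀) *ᵥ pairDiff k ℓ v ∈ krylov 𝐀 B := by
    rw [hy, ← hdk, ← hd]
    exact forcedResponse_mem (fun _ => mulVec_mem_krylov_of_mem) mulVec_mem_krylov τ u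
  have := exp_mulVec_mem_krylov (-τ) hmem
  rwa [exp_smul_mulVec_exp_smul_mulVec, neg_add_cancel, zero_smul, exp_zero, one_mulVec] at this

theorem exists_sync_control {k ℓ : m} (hkl : k ≠ ℓ) (hK : ∀ v, pairDiff k ℓ v ∈ krylov 𝐀 B)
    (x0 : m × ι → ℝ) : ∃ u : ℝ → J → ℝ, Continuous u ∧
      (∀ j, (exp ((1 : ℝ) • 𝐀) *ᵥ x0 + forcedResponse 𝐀 B 1 u) (k, j) =
        (exp ((1 : ℝ) • 𝐀) *ᵥ x0 + forcedResponse 𝐀 B 1 u) (ℓ, j)) ∧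
      ∀ i, i ≠ k → i ≠ ℓ → ∀ j, (exp ((1 : ℝ) • 𝐀) *ᵥ x0 + forcedResponse 𝐀 B 1 u) (i, j) =
        (exp ((1 : ℝ) • A) *ᵥ fun j' => x0 (i, j')) j := by
  let y : m → ι → ℝ := fun i => exp ((1 : ℝ) • A) *ᵥ fun j' => x0 (i, j')
  obtain ⟨u, hu, hd⟩ := exists_forcedResponse_eq (hK ((2 : ℝ)⁻¹ • (y ℓ - y k)))
  refine ⟨u, hu, fun j => ?_, fun i hik hil j => ?_⟩ <;>
    simp only [hd, Pi.add_apply, exp_smul_one_kronecker_mulVec_apply]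
  · simp [pairDiff, hkl, Ne.symm hkl, y]
    ring
  · simp [pairDiff, hik, hil]

end Array

end Matrix

end

open Matrix in
theorem stmt9_general (n q p : ℕ)
    (A : Matrix (Fin n) (Fin n) ℝ)
    (B : Matrix (Fin q × Fin n) (Fin p) ℝ)
    (hB : ∀ σ (j : Fin n), ∑ i : Fin q, B (i, j) σ = 0)
    (k ℓ : Fin q) (hkl : k ≠ ℓ) :
    (∀ x0 : Fin q × Fin n → ℝ, ∃ τ > (0 : ℝ), ∃ u : ℝ → Fin p → ℝ, Continuous u ∧
      ∃ xτ : Fin q × Fin n → ℝ,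
        xτ = (NormedSpace.exp (τ • ((1 : Matrix (Fin q) (Fin q) ℝ) ⊗ₖ A))).mulVec x0 +
          ∫ t in (0 : ℝ)..τ,
            (NormedSpace.exp ((τ - t) • ((1 : Matrix (Fin q) (Fin q) ℝ) ⊗ₖ A))).mulVec
              (B.mulVec (u t)) ∧
        (∀ j, xτ (k, j) = xτ (ℓ, j)) ∧
        (∀ i, i ≠ k → i ≠ ℓ → ∀ j,
          xτ (i, j) = (NormedSpace.exp (τ • A)).mulVec (fun j' => x0 (i, j')) j)) ↔
    (∀ x : Fin q × Fin n → ℝ,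
      (∃ v : Fin n → ℝ, ∀ i j, x (i, j) =
        ((if i = k then (1 : ℝ) else 0) - (if i = ℓ then 1 else 0)) * v j) →
      ∃ α : Fin n × Fin p → ℝ,
        (ctrb ((1 : Matrix (Fin q) (Fin q) ℝ) ⊗ₖ A) B n).mulVec α = x) := by
  have hK : ∀ x, (∃ α, (ctrb ((1 : Matrix (Fin q) (Fin q) ℝ) ⊗ₖ A) B n).mulVec α = x) ↔
      x ∈ krylov ((1 : Matrix (Fin q) (Fin q) ℝ) ⊗ₖ A) B := fun x => by
    rw [← range_ctrb_one_kronecker_eq_krylov (Fintype.card_fin n).le]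
    rfl
  constructor
  · rintro hctl x ⟨v, hv⟩
    obtain rfl : x = pairDiff k ℓ v := funext fun ij => hv ij.1 ij.2
    obtain ⟨τ, -, u, -, _, rfl, hsync, hrest⟩ := hctl (-pairDiff k ℓ v)
    exact (hK _).2 (pairDiff_mem_krylov_of_sync hkl hB hsync hrest)
  · intro h x0
    obtain ⟨u, hu, hsync, hrest⟩ :=
      exists_sync_control hkl (fun v => (hK _).1 (h _ ⟨v, fun _ _ => rfl⟩)) x0
    exact ⟨1, one_pos, u, hu, _, rfl, hsync, hrest⟩

/-- the relatively actuated array is (k,ℓ)-controllable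
(`x_k(τ) = x_ℓ(τ)` while `x_i(τ) = e^{Aτ}x_i(0)` for `i ≠ k, ℓ`) iff
`range 𝐖 ⊇ range[(e_k − e_ℓ) ⊗ I_n]`. -/
theorem stmt9 (n q p : ℕ) (hq : 2 ≤ q)
    (A : Matrix (Fin n) (Fin n) ℝ)
    (B : Matrix (Fin q × Fin n) (Fin p) ℝ)
    (hB : ∀ σ (j : Fin n), ∑ i : Fin q, B (i, j) σ = 0)
    (k ℓ : Fin q) (hkl : k ≠ ℓ) :
    (∀ x0 : Fin q × Fin n → ℝ, ∃ τ > (0 : ℝ), ∃ u : ℝ → Fin p → ℝ, Continuous u ∧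
      ∃ xτ : Fin q × Fin n → ℝ,
        xτ = (NormedSpace.exp (τ • ((1 : Matrix (Fin q) (Fin q) ℝ) ⊗ₖ A))).mulVec x0 +
          ∫ t in (0 : ℝ)..τ,
            (NormedSpace.exp ((τ - t) • ((1 : Matrix (Fin q) (Fin q) ℝ) ⊗ₖ A))).mulVec
              (B.mulVec (u t)) ∧
        (∀ j, xτ (k, j) = xτ (ℓ, j)) ∧
        (∀ i, i ≠ k → i ≠ ℓ → ∀ j,
          xτ (i, j) = (NormedSpace.exp (τ • A)).mulVec (fun j' => x0 (i, j')) j)) ↔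
    (∀ x : Fin q × Fin n → ℝ,
      (∃ v : Fin n → ℝ, ∀ i j, x (i, j) =
        ((if i = k then (1 : ℝ) else 0) - (if i = ℓ then 1 else 0)) * v j) →
      ∃ α : Fin n × Fin p → ℝ,
        (ctrb ((1 : Matrix (Fin q) (Fin q) ℝ) ⊗ₖ A) B n).mulVec α = x) :=
  stmt9_general n q p A B hB k ℓ hkl
end
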